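/- Let ρ be a probability measure on ℝ^d, and let U := Σ_{n=0}^∞ ρ^{*n} and U⁻ := Σ_{n=0}^∞ (ρ⁻)^{*n} with ρ⁻ := ρ(−·). If (U * U⁻)(B_0^{r_0}) < ∞ for some r_0 > 0, then (U * U⁻)(B) < ∞ for every bounded Borel set B ⊆ ℝ^d; in particular (U * U⁻)(B_0^r) < ∞ for every r > 0. -/

import Mathlib

open MeasureTheory

/-- Convolution of two measures on `ℝ^d`: the pushforward of the product measure
under addition. -/
noncomputable def mconv {d : ℕ} (μ ν : Measure (EuclideanSpace ℝ (Fin d))) :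
    Measure (EuclideanSpace ℝ (Fin d)) :=
  Measure.map (fun p => p.1 + p.2) (μ.prod ν)

/-- Convolution powers: `ρ^{*0} = δ_0`, `ρ^{*(n+1)} = ρ^{*n} * ρ`. -/
noncomputable def convPow {d : ℕ} (ρ : Measure (EuclideanSpace ℝ (Fin d))) :
    ℕ → Measure (EuclideanSpace ℝ (Fin d))
  | 0 => Measure.dirac 0
  | n + 1 => mconv (convPow ρ n) ρ

/-- Expected occupation measure `U = Σ_{n≥0} ρ^{*n}` of the random walk with step
distribution `ρ`. -/
noncomputable def occMeasure {d : ℕ} (ρ : Measure (EuclideanSpace ℝ (Fin d))) :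
    Measure (EuclideanSpace ℝ (Fin d)) :=
  Measure.sum (fun n => convPow ρ n)

/-- Reflected measure `ρ⁻ = ρ(−·)`. -/
noncomputable def mrefl {d : ℕ} (ρ : Measure (EuclideanSpace ℝ (Fin d))) :
    Measure (EuclideanSpace ℝ (Fin d)) :=
  Measure.map (fun x => -x) ρ

/-!
Write `Q := U ∗ U⁻`; it is the sum of the measures `ρ^{*m} ∗ (ρ⁻)^{*n}`. If `Q` charges the ball
`B_x^{r₀/2}`, then so does one of these terms, and its reflection `λ := ρ^{*n} ∗ (ρ⁻)^{*m}`
charges `B_{-x}^{r₀/2}`. Since `ρ^{*n} ∗ U ≤ U` and `(ρ⁻)^{*m} ∗ U⁻ ≤ U⁻`, the measure `Q` is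
`λ`-excessive: `λ ∗ Q ≤ Q`. As `B_{-x}^{r₀/2} + B_x^{r₀/2} ⊆ B_0^{r₀}`, this gives
`λ(B_{-x}^{r₀/2}) · Q(B_x^{r₀/2}) ≤ Q(B_0^{r₀}) < ∞`, so every ball of radius `r₀/2` has finite
`Q`-measure, and a bounded set is covered by finitely many of them.
-/

open Metric
open scoped Pointwise

namespace MeasureTheory.Measure

section Convolution

variable {G : Type*} [MeasurableSpace G]

theorem sum_comp_le_sum_of_injective {ι κ : Type*} {f : ι → κ} (hf : f.Injective)
    (μ : κ → Measure G) : sum (fun i => μ (f i)) ≤ sum μ :=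
  Measure.le_iff.2 fun s hs => by
    simpa only [sum_apply _ hs] using ENNReal.tsum_comp_le_tsum_of_injective hf (μ · s)

theorem conv_mono [AddMonoid G] [MeasurableAdd₂ G] {μ μ' ν ν' : Measure G}
    [SFinite ν] [SFinite ν'] (hμ : μ ≤ μ') (hν : ν ≤ ν') : μ ∗ ν ≤ μ' ∗ ν' :=
  map_mono (prod_mono hμ hν) measurable_add

theorem sum_conv_sum [AddMonoid G] [MeasurableAdd₂ G] {ι κ : Type*} [Countable κ]
    (μ : ι → Measure G) (ν : κ → Measure G) [∀ k, SFinite (ν k)] :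
    sum μ ∗ sum ν = sum fun p : ι × κ => μ p.1 ∗ ν p.2 := by
  rw [conv, prod_sum, map_sum measurable_add.aemeasurable]
  rfl

theorem conv_sum [AddMonoid G] [MeasurableAdd₂ G] {κ : Type*} [Countable κ]
    (μ : Measure G) (ν : κ → Measure G) [∀ k, SFinite (ν k)] :
    μ ∗ sum ν = sum fun k => μ ∗ ν k := by
  rw [conv, prod_sum_right, map_sum measurable_add.aemeasurable]
  rfl

theorem measure_mul_measure_le_conv [AddMonoid G] [MeasurableAdd₂ G] (μ ν : Measure G)
    [SFinite ν] {s t u : Set G} (h : s + t ⊆ u) : μ s * ν t ≤ (μ ∗ ν) u := by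
  rw [← prod_prod]
  calc μ.prod ν (s ×ˢ t) ≤ μ.prod ν ((fun p : G × G => p.1 + p.2) ⁻¹' u) :=
        measure_mono fun p hp => h (Set.add_mem_add hp.1 hp.2)
    _ ≤ (μ ∗ ν) u := le_map_apply measurable_add.aemeasurable u

theorem neg_conv [AddCommGroup G] [MeasurableAdd₂ G] [MeasurableNeg G] (μ ν : Measure G)
    [SFinite μ] [SFinite ν] : (μ ∗ ν).neg = μ.neg ∗ ν.neg :=
  map_conv_addMonoidHom negAddMonoidHom measurable_neg

theorem conv_conv_conv_comm [AddCommMonoid G] [MeasurableAdd₂ G] (μ ν κ η : Measure G)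
    [SFinite μ] [SFinite ν] [SFinite κ] [SFinite η] :
    (μ ∗ ν) ∗ (κ ∗ η) = (μ ∗ κ) ∗ (ν ∗ η) := by
  rw [conv_assoc, conv_assoc, ← conv_assoc ν, conv_comm ν κ, conv_assoc κ]

theorem measure_ball_lt_top_of_conv_le {E : Type*} [NormedAddCommGroup E] [NormedSpace ℝ E]
    [MeasurableSpace E] [MeasurableAdd₂ E] {Q lam : Measure E} [SFinite Q] (hQ : lam ∗ Q ≤ Q)
    {r : ℝ} (hr : 0 < r) (hfin : Q (ball 0 r) < ⊤) {x : E} (hx : lam (ball (-x) (r / 2)) ≠ 0) :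
    Q (ball x (r / 2)) < ⊤ := by
  have hsub : ball (-x) (r / 2) + ball x (r / 2) ⊆ ball 0 r := by
    rw [ball_add_ball (half_pos hr) (half_pos hr), neg_add_cancel, add_halves]
  refine ENNReal.lt_top_of_mul_ne_top_right (ne_top_of_le_ne_top hfin.ne ?_) hx
  exact (measure_mul_measure_le_conv lam Q hsub).trans (hQ _)

end Convolution

end MeasureTheory.Measure

open MeasureTheory.Measure

theorem measure_lt_top_of_isBounded {X : Type*} [PseudoMetricSpace X] [ProperSpace X]
    [MeasurableSpace X] {μ : Measure X} {ε : ℝ} (hε : 0 < ε) (hball : ∀ x, μ (ball x ε) < ⊤)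
    {B : Set X} (hB : Bornology.IsBounded B) : μ B < ⊤ := by
  obtain ⟨t, ht, hcover⟩ :=
    totallyBounded_iff.1 hB.isCompact_closure.totallyBounded ε hε
  exact (measure_mono (subset_closure.trans hcover)).trans_lt
    (measure_biUnion_lt_top ht fun x _ => hball x)

section RandomWalk

variable {d : ℕ}

theorem mconv_eq_conv (μ ν : Measure (EuclideanSpace ℝ (Fin d))) : mconv μ ν = μ ∗ ν := rfl

theorem mrefl_eq_neg (μ : Measure (EuclideanSpace ℝ (Fin d))) : mrefl μ = μ.neg := rfl

theorem convPow_succ (ρ : Measure (EuclideanSpace ℝ (Fin d))) (n : ℕ) :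
    convPow ρ (n + 1) = convPow ρ n ∗ ρ := rfl

variable (ρ : Measure (EuclideanSpace ℝ (Fin d))) [SFinite ρ]

instance sFinite_convPow (n : ℕ) : SFinite (convPow ρ n) := by
  induction n with
  | zero => exact inferInstanceAs (SFinite (dirac 0))
  | succ n ih => rw [convPow_succ]; infer_instance

instance sFinite_occMeasure : SFinite (occMeasure ρ) :=
  inferInstanceAs (SFinite (sum _))

theorem convPow_conv_convPow (m n : ℕ) : convPow ρ m ∗ convPow ρ n = convPow ρ (m + n) := by
  induction n with
  | zero => exact conv_dirac_zero _
  | succ n ih => rw [convPow_succ, ← conv_assoc, ih, ← convPow_succ, add_assoc]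

theorem convPow_conv_occMeasure_le (n : ℕ) : convPow ρ n ∗ occMeasure ρ ≤ occMeasure ρ := by
  rw [occMeasure, conv_sum]
  simp_rw [convPow_conv_convPow]
  exact sum_comp_le_sum_of_injective (add_right_injective n) (convPow ρ)

theorem neg_convPow (n : ℕ) : (convPow ρ n).neg = convPow ρ.neg n := by
  induction n with
  | zero => exact (map_dirac' measurable_neg 0).trans (congrArg dirac neg_zero)
  | succ n ih => rw [convPow_succ, convPow_succ, neg_conv, ih]

theorem occMeasure_conv_occMeasure :
    occMeasure ρ ∗ occMeasure ρ.neg = sum fun p : ℕ × ℕ => convPow ρ p.1 ∗ convPow ρ.neg p.2 :=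
  sum_conv_sum _ _

theorem conv_occMeasure_conv_occMeasure_le (m n : ℕ) :
    (convPow ρ m ∗ convPow ρ.neg n) ∗ (occMeasure ρ ∗ occMeasure ρ.neg) ≤
      occMeasure ρ ∗ occMeasure ρ.neg := by
  rw [conv_conv_conv_comm]
  exact conv_mono (convPow_conv_occMeasure_le ρ m) (convPow_conv_occMeasure_le ρ.neg n)

theorem occMeasure_conv_occMeasure_ball_lt_top {r : ℝ} (hr : 0 < r)
    (hfin : (occMeasure ρ ∗ occMeasure ρ.neg) (ball 0 r) < ⊤) (x : EuclideanSpace ℝ (Fin d)) :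
    (occMeasure ρ ∗ occMeasure ρ.neg) (ball x (r / 2)) < ⊤ := by
  by_cases hx : (occMeasure ρ ∗ occMeasure ρ.neg) (ball x (r / 2)) = 0
  · simp [hx]
  obtain ⟨⟨m, n⟩, hmn⟩ :
      ∃ p : ℕ × ℕ, (convPow ρ p.1 ∗ convPow ρ.neg p.2) (ball x (r / 2)) ≠ 0 := by
    by_contra! h
    rw [occMeasure_conv_occMeasure, Measure.sum_apply _ measurableSet_ball] at hx
    exact hx (ENNReal.tsum_eq_zero.2 h)
  have hrefl : convPow ρ n ∗ convPow ρ.neg m = (convPow ρ m ∗ convPow ρ.neg n).neg := by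
    rw [neg_conv, neg_convPow, neg_convPow, Measure.neg_neg, conv_comm]
  refine measure_ball_lt_top_of_conv_le (conv_occMeasure_conv_occMeasure_le ρ n m) hr hfin ?_
  rwa [hrefl, Measure.neg_apply, neg_ball, neg_neg]

end RandomWalk

theorem stmt11_general (d : ℕ)
    (ρ : Measure (EuclideanSpace ℝ (Fin d))) [IsProbabilityMeasure ρ]
    (r₀ : ℝ) (hr₀ : 0 < r₀)
    (hfin : mconv (occMeasure ρ) (occMeasure (mrefl ρ)) (Metric.ball 0 r₀) < ⊤) :
    (∀ B : Set (EuclideanSpace ℝ (Fin d)), MeasurableSet B → Bornology.IsBounded B →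
        mconv (occMeasure ρ) (occMeasure (mrefl ρ)) B < ⊤) ∧
      ∀ r : ℝ, 0 < r →
        mconv (occMeasure ρ) (occMeasure (mrefl ρ)) (Metric.ball 0 r) < ⊤ := by
  rw [mrefl_eq_neg, mconv_eq_conv] at *
  have hbounded : ∀ B : Set (EuclideanSpace ℝ (Fin d)), MeasurableSet B →
      Bornology.IsBounded B → (occMeasure ρ ∗ occMeasure ρ.neg) B < ⊤ := fun _ _ hB =>
    measure_lt_top_of_isBounded (half_pos hr₀)
      (occMeasure_conv_occMeasure_ball_lt_top ρ hr₀ hfin) hB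
  exact ⟨hbounded, fun r _ => hbounded _ measurableSet_ball isBounded_ball⟩

/-- If `(U * U⁻)(B_0^{r₀}) < ∞` for some `r₀ > 0`, then `U * U⁻` is
finite on every bounded Borel set; in particular on every ball `B_0^r`. -/
theorem stmt11 (d : ℕ) (hd : 1 ≤ d)
    (ρ : Measure (EuclideanSpace ℝ (Fin d))) [IsProbabilityMeasure ρ]
    (r₀ : ℝ) (hr₀ : 0 < r₀)
    (hfin : mconv (occMeasure ρ) (occMeasure (mrefl ρ)) (Metric.ball 0 r₀) < ⊤) :
    (∀ B : Set (EuclideanSpace ℝ (Fin d)), MeasurableSet B → Bornology.IsBounded B →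
        mconv (occMeasure ρ) (occMeasure (mrefl ρ)) B < ⊤) ∧
      ∀ r : ℝ, 0 < r →
        mconv (occMeasure ρ) (occMeasure (mrefl ρ)) (Metric.ball 0 r) < ⊤ :=
  stmt11_general d ρ r₀ hr₀ hfin
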